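/- Maximum principle step of the Schwarz-type lemma: Let u : Δ̄ → ℝ≥0 be continuous, vanishing on ∂Δ, u = (1−|z|²)²·v with v smooth and nonnegative on Δ, and suppose at every point z where v(z) > 0 one has i∂∂̄ log v ≥ ε·v (in the sense of (1,1)-forms identified with functions times idz∧dz̄/2). If u attains a positive maximum at z₀ ∈ Δ, then (ε/2)·v(z₀)·(1−|z₀|²)² ≤ 1, hence u(z) ≤ 2/ε for all z ∈ Δ. -/

import Mathlib

/-!
At an interior maximum of `u = (1 - ‖z‖²)² v` the function `log u = log v + 2 log (1 - ‖z‖²)`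
also has a local maximum, so its Laplacian is nonpositive there: every second directional
derivative at a local maximum is `≤ 0`. A direct computation gives
`Δ log (1 - ‖z‖²) = -4 / (1 - ‖z‖²)²` on the disc, hence `Δ log v (z₀) ≤ 8 / (1 - ‖z₀‖²)²`;
together with `Δ log v ≥ 4 ε v` this is `ε v(z₀) (1 - ‖z₀‖²)² ≤ 2`, and `u ≤ u(z₀)` does the rest.
-/

/-- The complex Laplacian `∂²/∂z∂z̄ = (1/4)(∂²/∂x² + ∂²/∂y²)` of a real-valued function on
`ℂ`; with this normalization a `(1,1)`-form `i∂∂̄ u` is identified with the function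
`lapZZbar u` (times `i dz∧dz̄/2`), and `i∂∂̄ log(1−|z|²)² = −2/(1−|z|²)²`. -/
noncomputable def lapZZbar (u : ℂ → ℝ) (z : ℂ) : ℝ :=
  (1 / 4) * ((iteratedFDeriv ℝ 2 u z) ![1, 1] +
    (iteratedFDeriv ℝ 2 u z) ![Complex.I, Complex.I])

open Filter Set Topology Laplacian Module InnerProductSpace

theorem IsLocalMax.deriv_deriv_nonpos {g : ℝ → ℝ} {a : ℝ} (h : IsLocalMax g a)
    (hc : ContinuousAt g a) : deriv (deriv g) a ≤ 0 := by
  by_contra! hpos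
  -- The second derivative test makes `a` also a local minimum, so `g` is locally constant,
  -- which contradicts `deriv g` changing sign at `a`.
  have hmin : IsLocalMin g a := isLocalMin_of_deriv_deriv_pos hpos h.deriv_eq_zero hc
  have hconst : ∀ᶠ x in 𝓝 a, ∀ᶠ y in 𝓝 x, g y = g a :=
    ((h.and hmin).mono fun _ hx => le_antisymm hx.1 hx.2).eventually_nhds
  have hsign := eventually_nhdsWithin_sign_eq_of_deriv_pos hpos h.deriv_eq_zero
  obtain ⟨x, ⟨hx_const, hx_sign⟩, hxa⟩ :=
    (((hconst.and hsign).filter_mono nhdsWithin_le_nhds).and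
      (self_mem_nhdsWithin (s := {a}ᶜ))).exists
  rw [Filter.EventuallyEq.deriv_eq (f := fun _ => g a) hx_const, deriv_const, sign_zero,
    eq_comm, sign_eq_zero_iff, sub_eq_zero] at hx_sign
  exact hxa hx_sign

theorem deriv_deriv_log_quadratic {a b c : ℝ} (ha : a ≠ 0) :
    deriv (deriv fun t => Real.log (a + b * t + c * t ^ 2)) 0 = (2 * c * a - b ^ 2) / a ^ 2 := by
  set q : ℝ → ℝ := fun t => a + b * t + c * t ^ 2
  have hq : ∀ t, HasDerivAt q (b + 2 * c * t) t := fun t => by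
    refine ((((hasDerivAt_id t).const_mul b).const_add a).add
      ((hasDerivAt_pow 2 t).const_mul c)).congr_deriv ?_
    simp only [Nat.cast_ofNat]; ring
  have hq_ne : ∀ᶠ t in 𝓝 0, q t ≠ 0 :=
    (hq 0).continuousAt.eventually_ne (by simpa [q] using ha)
  have hderiv : deriv (fun t => Real.log (q t)) =ᶠ[𝓝 0] fun t => (b + 2 * c * t) / q t :=
    hq_ne.mono fun t ht => ((hq t).log ht).deriv
  have hlin : HasDerivAt (fun t : ℝ => b + 2 * c * t) (2 * c) 0 := by
    simpa using ((hasDerivAt_id (0 : ℝ)).const_mul (2 * c)).const_add b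
  have hderiv₂ : HasDerivAt (fun t => (b + 2 * c * t) / q t)
      ((2 * c * q 0 - (b + 2 * c * 0) * (b + 2 * c * 0)) / q 0 ^ 2) 0 :=
    hlin.div (hq 0) (by simpa [q] using ha)
  rw [hderiv.deriv_eq, hderiv₂.deriv]
  simp [q, sq]

theorem Real.log_sq_mul {s c : ℝ} (h : s ^ 2 * c ≠ 0) :
    Real.log (s ^ 2 * c) = Real.log c + 2 * Real.log s := by
  rw [Real.log_mul (left_ne_zero_of_mul h) (right_ne_zero_of_mul h), Real.log_pow]
  push_cast
  ring

section NormedSpace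

variable {E F : Type*} [NormedAddCommGroup E] [NormedSpace ℝ E]
  [NormedAddCommGroup F] [NormedSpace ℝ F]

theorem ContDiffAt.iteratedFDeriv_two_apply_self_eq_deriv_deriv {f : E → F} {x : E}
    (hf : ContDiffAt ℝ 2 f x) (v : E) :
    iteratedFDeriv ℝ 2 f x ![v, v] = deriv (deriv fun t : ℝ => f (x + t • v)) 0 := by
  have hline : ∀ t : ℝ, HasDerivAt (fun t : ℝ => x + t • v) v t := fun t => by
    simpa using ((hasDerivAt_id t).smul_const v).const_add x
  have hline_tendsto : Tendsto (fun t : ℝ => x + t • v) (𝓝 0) (𝓝 x) := by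
    simpa using (hline 0).continuousAt.tendsto
  have hdiff : ∀ᶠ y in 𝓝 x, DifferentiableAt ℝ f y :=
    (hf.eventually (by simp)).mono fun y hy => hy.differentiableAt two_ne_zero
  have hderiv : deriv (fun t : ℝ => f (x + t • v)) =ᶠ[𝓝 0]
      fun t => fderiv ℝ f (x + t • v) v :=
    (hline_tendsto.eventually hdiff).mono fun t ht =>
      (ht.hasFDerivAt.comp_hasDerivAt t (hline t)).deriv
  have hdiff₂ : DifferentiableAt ℝ (fderiv ℝ f) x :=
    (hf.fderiv_right (m := 1) le_rfl).differentiableAt one_ne_zero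
  have hderiv₂ : HasDerivAt (fun t : ℝ => fderiv ℝ f (x + t • v) v)
      (fderiv ℝ (fderiv ℝ f) x v v) 0 :=
    (ContinuousLinearMap.apply ℝ F v).hasFDerivAt.comp_hasDerivAt 0
      (hdiff₂.hasFDerivAt.comp_hasDerivAt_of_eq 0 (hline 0) (by simp))
  rw [hderiv.deriv_eq, hderiv₂.deriv, iteratedFDeriv_two_apply]
  rfl

theorem IsLocalMax.iteratedFDeriv_two_apply_self_nonpos {f : E → ℝ} {x : E}
    (h : IsLocalMax f x) (hf : ContDiffAt ℝ 2 f x) (v : E) :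
    iteratedFDeriv ℝ 2 f x ![v, v] ≤ 0 := by
  have hline : ContinuousAt (fun t : ℝ => x + t • v) 0 := by fun_prop
  rw [hf.iteratedFDeriv_two_apply_self_eq_deriv_deriv]
  exact IsLocalMax.deriv_deriv_nonpos (IsLocalMax.comp_continuous (by simpa using h) hline)
    (hf.continuousAt.comp_of_eq hline (by simp))

end NormedSpace

section InnerProductSpace

variable {E : Type*} [NormedAddCommGroup E] [InnerProductSpace ℝ E]

theorem contDiffAt_log_one_sub_norm_sq {x : E} (hx : ‖x‖ < 1) :
    ContDiffAt ℝ 2 (fun y : E => Real.log (1 - ‖y‖ ^ 2)) x :=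
  (contDiffAt_const.sub (contDiff_norm_sq ℝ).contDiffAt).log (by nlinarith [norm_nonneg x])

theorem iteratedFDeriv_two_log_one_sub_norm_sq {x : E} (hx : ‖x‖ < 1) (v : E) :
    iteratedFDeriv ℝ 2 (fun y => Real.log (1 - ‖y‖ ^ 2)) x ![v, v] =
      (-2 * ‖v‖ ^ 2 * (1 - ‖x‖ ^ 2) - 4 * ⟪x, v⟫_ℝ ^ 2) / (1 - ‖x‖ ^ 2) ^ 2 := by
  have hline : (fun t : ℝ => Real.log (1 - ‖x + t • v‖ ^ 2)) =
      fun t => Real.log ((1 - ‖x‖ ^ 2) + (-2 * ⟪x, v⟫_ℝ) * t + (-‖v‖ ^ 2) * t ^ 2) := by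
    funext t
    rw [norm_add_sq_real, real_inner_smul_right, norm_smul, mul_pow, Real.norm_eq_abs, sq_abs]
    ring_nf
  rw [(contDiffAt_log_one_sub_norm_sq hx).iteratedFDeriv_two_apply_self_eq_deriv_deriv, hline,
    deriv_deriv_log_quadratic (by nlinarith [norm_nonneg x])]
  ring

variable [FiniteDimensional ℝ E]

theorem IsLocalMax.laplacian_nonpos {f : E → ℝ} {x : E} (h : IsLocalMax f x)
    (hf : ContDiffAt ℝ 2 f x) : Δ f x ≤ 0 := by
  rw [laplacian_eq_iteratedFDeriv_stdOrthonormalBasis]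
  exact Finset.sum_nonpos fun i _ => h.iteratedFDeriv_two_apply_self_nonpos hf _

theorem laplacian_log_one_sub_norm_sq {x : E} (hx : ‖x‖ < 1) :
    Δ (fun y : E => Real.log (1 - ‖y‖ ^ 2)) x =
      -((2 * finrank ℝ E * (1 - ‖x‖ ^ 2) + 4 * ‖x‖ ^ 2) / (1 - ‖x‖ ^ 2) ^ 2) := by
  have hparseval : ∑ i, ⟪x, stdOrthonormalBasis ℝ E i⟫_ℝ ^ 2 = ‖x‖ ^ 2 := by
    rw [← real_inner_self_eq_norm_sq, ← (stdOrthonormalBasis ℝ E).sum_inner_mul_inner x x]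
    simp_rw [real_inner_comm (stdOrthonormalBasis ℝ E _) x, sq]
  rw [laplacian_eq_iteratedFDeriv_stdOrthonormalBasis]
  simp only [iteratedFDeriv_two_log_one_sub_norm_sq hx, OrthonormalBasis.norm_eq_one, one_pow,
    mul_one]
  rw [← Finset.sum_div, Finset.sum_sub_distrib, ← Finset.mul_sum, ← Finset.mul_sum, hparseval]
  simp only [Finset.sum_const, Finset.card_univ, Fintype.card_fin, nsmul_eq_mul]
  ring

theorem laplacian_log_le_of_isLocalMax {v : E → ℝ} {x₀ : E} (hx₀ : ‖x₀‖ < 1)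
    (hv : ContDiffAt ℝ 2 v x₀) (hv₀ : 0 < v x₀)
    (hmax : IsLocalMax (fun x => (1 - ‖x‖ ^ 2) ^ 2 * v x) x₀) :
    Δ (fun x => Real.log (v x)) x₀ ≤
      2 * ((2 * finrank ℝ E * (1 - ‖x₀‖ ^ 2) + 4 * ‖x₀‖ ^ 2) / (1 - ‖x₀‖ ^ 2) ^ 2) := by
  set φ : E → ℝ := fun y => Real.log (1 - ‖y‖ ^ 2)
  have hφ : ContDiffAt ℝ 2 φ x₀ := contDiffAt_log_one_sub_norm_sq hx₀
  have hlog_v : ContDiffAt ℝ 2 (fun x => Real.log (v x)) x₀ := hv.log hv₀.ne'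
  have hu₀ : 0 < (1 - ‖x₀‖ ^ 2) ^ 2 * v x₀ := by
    have : 0 < 1 - ‖x₀‖ ^ 2 := by nlinarith [norm_nonneg x₀]
    positivity
  have hu_cont : ContinuousAt (fun x => (1 - ‖x‖ ^ 2) ^ 2 * v x) x₀ :=
    (by fun_prop : Continuous fun x : E => (1 - ‖x‖ ^ 2) ^ 2).continuousAt.mul hv.continuousAt
  have hu_pos : ∀ᶠ x in 𝓝 x₀, 0 < (1 - ‖x‖ ^ 2) ^ 2 * v x :=
    hu_cont.eventually (eventually_gt_nhds hu₀)
  have hmax_log : IsLocalMax ((fun x => Real.log (v x)) + (2 : ℝ) • φ) x₀ := by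
    filter_upwards [hmax, hu_pos] with x hx hx_pos
    simp only [Pi.add_apply, Pi.smul_apply, smul_eq_mul, φ]
    rw [← Real.log_sq_mul hx_pos.ne', ← Real.log_sq_mul hu₀.ne']
    exact Real.log_le_log hx_pos hx
  have h2φ : ContDiffAt ℝ 2 ((2 : ℝ) • φ) x₀ := hφ.const_smul (2 : ℝ)
  have hΔ := hmax_log.laplacian_nonpos (hlog_v.add h2φ)
  rw [hlog_v.laplacian_add h2φ, laplacian_smul 2 hφ, smul_eq_mul,
    laplacian_log_one_sub_norm_sq hx₀] at hΔ
  linarith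

end InnerProductSpace

theorem lapZZbar_eq_laplacian (f : ℂ → ℝ) (z : ℂ) : lapZZbar f z = Δ f z / 4 := by
  rw [lapZZbar, laplacian_eq_iteratedFDeriv_complexPlane]
  ring

theorem maximum_principle_step_general
    (u v : ℂ → ℝ) (ε : ℝ) (hε : 0 < ε)
    (hv_smooth : ContDiffOn ℝ 2 v (Metric.ball (0 : ℂ) 1))
    (huv : ∀ z ∈ Metric.closedBall (0 : ℂ) 1,
      u z = (1 - ‖z‖ ^ 2) ^ 2 * v z)
    (hcurv : ∀ z ∈ Metric.ball (0 : ℂ) 1, 0 < v z →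
      ε * v z ≤ lapZZbar (fun w => Real.log (v w)) z)
    (z₀ : ℂ) (hz₀ : z₀ ∈ Metric.ball (0 : ℂ) 1)
    (hmax_pos : 0 < u z₀)
    (hmax : ∀ z ∈ Metric.closedBall (0 : ℂ) 1, u z ≤ u z₀) :
    (ε / 2) * v z₀ * (1 - ‖z₀‖ ^ 2) ^ 2 ≤ 1 ∧
    ∀ z ∈ Metric.ball (0 : ℂ) 1, u z ≤ 2 / ε := by
  have hz₀_norm : ‖z₀‖ < 1 := mem_ball_zero_iff.mp hz₀
  have hu_eq : ∀ z ∈ Metric.ball (0 : ℂ) 1, u z = (1 - ‖z‖ ^ 2) ^ 2 * v z :=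
    fun z hz => huv z (Metric.ball_subset_closedBall hz)
  have hv₀ : 0 < v z₀ := pos_of_mul_pos_right (hu_eq z₀ hz₀ ▸ hmax_pos) (sq_nonneg _)
  have hmax_loc : IsLocalMax (fun z => (1 - ‖z‖ ^ 2) ^ 2 * v z) z₀ := by
    filter_upwards [Metric.isOpen_ball.mem_nhds hz₀] with z hz
    rw [← hu_eq z hz, ← hu_eq z₀ hz₀]
    exact hmax z (Metric.ball_subset_closedBall hz)
  have hΔ := laplacian_log_le_of_isLocalMax hz₀_norm
    (hv_smooth.contDiffAt (Metric.isOpen_ball.mem_nhds hz₀)) hv₀ hmax_loc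
  have hcurv₀ := hcurv z₀ hz₀ hv₀
  rw [lapZZbar_eq_laplacian] at hcurv₀
  have hs : 0 < 1 - ‖z₀‖ ^ 2 := by nlinarith [norm_nonneg z₀]
  have hΔ' : Δ (fun w => Real.log (v w)) z₀ ≤ 4 * (2 / (1 - ‖z₀‖ ^ 2) ^ 2) := by
    refine hΔ.trans_eq ?_
    rw [Complex.finrank_real_complex]
    field_simp
    ring
  have hbound : ε * v z₀ * (1 - ‖z₀‖ ^ 2) ^ 2 ≤ 2 :=
    (le_div_iff₀ (by positivity)).mp (by linarith)
  refine ⟨by linarith, fun z hz => ?_⟩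
  rw [le_div_iff₀ hε]
  nlinarith [hmax z (Metric.ball_subset_closedBall hz), hu_eq z₀ hz₀]

/-- **maximum principle step.** Let `u : Δ̄ → ℝ≥0` be continuous, vanishing
on `∂Δ`, with `u = (1−|z|²)²·v`, `v` smooth and nonnegative on `Δ`, and suppose
`i∂∂̄ log v ≥ ε·v` wherever `v > 0`. If `u` attains a positive maximum at `z₀ ∈ Δ`, then
`(ε/2)·v(z₀)·(1−|z₀|²)² ≤ 1`, hence `u ≤ 2/ε` on `Δ`. -/
theorem maximum_principle_step
    (u v : ℂ → ℝ) (ε : ℝ) (hε : 0 < ε)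
    (hu_cont : ContinuousOn u (Metric.closedBall (0 : ℂ) 1))
    (hu_nonneg : ∀ z ∈ Metric.closedBall (0 : ℂ) 1, 0 ≤ u z)
    (hu_bdry : ∀ z : ℂ, ‖z‖ = 1 → u z = 0)
    (hv_smooth : ContDiffOn ℝ 2 v (Metric.ball (0 : ℂ) 1))
    (hv_nonneg : ∀ z ∈ Metric.ball (0 : ℂ) 1, 0 ≤ v z)
    (huv : ∀ z ∈ Metric.closedBall (0 : ℂ) 1,
      u z = (1 - ‖z‖ ^ 2) ^ 2 * v z)
    (hcurv : ∀ z ∈ Metric.ball (0 : ℂ) 1, 0 < v z →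
      ε * v z ≤ lapZZbar (fun w => Real.log (v w)) z)
    (z₀ : ℂ) (hz₀ : z₀ ∈ Metric.ball (0 : ℂ) 1)
    (hmax_pos : 0 < u z₀)
    (hmax : ∀ z ∈ Metric.closedBall (0 : ℂ) 1, u z ≤ u z₀) :
    (ε / 2) * v z₀ * (1 - ‖z₀‖ ^ 2) ^ 2 ≤ 1 ∧
    ∀ z ∈ Metric.ball (0 : ℂ) 1, u z ≤ 2 / ε :=
  maximum_principle_step_general u v ε hε hv_smooth huv hcurv z₀ hz₀ hmax_pos hmax
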